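/- Let U ⊆ ℝ² be open, β : U → ℝ a positive C¹ function, γ̃ : U → M₂(ℝ) a C¹ map whose values are invertible symmetric matrices, and u₁, u₂ real-valued C² functions on U. Set H_i := β γ̃ ∇u_i for i = 1, 2 and H := [H₁, H₂]. Then at every point x ∈ U where H(x) is invertible, ∇(log β)(x) = − J γ̃(x) (H(x)ᵀ)⁻¹ c(x), where c(x) ∈ ℝ² is the vector with components c_i(x) = curl(γ̃⁻¹ H_i)(x) for i = 1, 2. -/

import Mathlib

open Matrix

/-- The gradient of a real-valued function on ℝ², as a vector of partial derivatives. -/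
noncomputable def grad (u : (Fin 2 → ℝ) → ℝ) (x : Fin 2 → ℝ) : Fin 2 → ℝ :=
  fun i => fderiv ℝ u x (Pi.single i 1)

/-- The 2×2 matrix with columns `a` and `b`. -/
def col2 (a b : Fin 2 → ℝ) : Matrix (Fin 2) (Fin 2) ℝ :=
  Matrix.of fun i => ![a i, b i]

/-- The rotation matrix `J = e₂⊗e₁ − e₁⊗e₂`, i.e. `Jv = (−v₂, v₁)`. -/
def J2 : Matrix (Fin 2) (Fin 2) ℝ := !![0, -1; 1, 0]

/-- The scalar 2D curl `∂₁F₂ − ∂₂F₁` of a vector field `F` on ℝ². -/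
noncomputable def curl2 (F : (Fin 2 → ℝ) → Fin 2 → ℝ) (x : Fin 2 → ℝ) : ℝ :=
  fderiv ℝ (fun y => F y 1) x (Pi.single 0 1) - fderiv ℝ (fun y => F y 0) x (Pi.single 1 1)

/-!
Because `γ̃⁻¹Hᵢ = β∇uᵢ` and the second derivatives of `uᵢ` commute, `curl(γ̃⁻¹Hᵢ) = ∇uᵢ · J∇β`.
Substituting `∇uᵢ = β⁻¹γ̃⁻¹Hᵢ` and using `γ̃ᵀ = γ̃`, the vector of the two curls is `β⁻¹ Hᵀ γ̃⁻¹ J∇β`;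
undoing `Hᵀ`, `γ̃⁻¹` and `J` (with `J² = −1`) leaves `∇β / β = ∇ log β`. Since `H = β γ̃ [∇u₁, ∇u₂]`,
invertibility of `H` also forces `β ≠ 0`, so `log β` is differentiable there.
-/

open Filter Topology

section LinearAlgebra

variable {A : Matrix (Fin 2) (Fin 2) ℝ} {b : ℝ} {v₁ v₂ : Fin 2 → ℝ}

lemma col2_mulVec_mulVec (M : Matrix (Fin 2) (Fin 2) ℝ) (a c : Fin 2 → ℝ) :
    col2 (M *ᵥ a) (M *ᵥ c) = M * col2 a c := by
  ext i j
  fin_cases j <;> simp [col2, mulVec, dotProduct, mul_apply]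

lemma col2_transpose_mulVec (a c w : Fin 2 → ℝ) : (col2 a c)ᵀ *ᵥ w = ![a ⬝ᵥ w, c ⬝ᵥ w] := by
  ext i
  fin_cases i <;> simp [col2, mulVec, dotProduct, Fin.sum_univ_two]

lemma J2_mul_J2 : J2 * J2 = -1 := by
  ext i j
  fin_cases i <;> fin_cases j <;> simp [J2]

lemma det_col2_smul_mulVec :
    (col2 ((b • A) *ᵥ v₁) ((b • A) *ᵥ v₂)).det = b ^ 2 * A.det * (col2 v₁ v₂).det := by
  rw [col2_mulVec_mulVec, det_mul, det_smul, Fintype.card_fin]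

lemma ne_zero_of_det_col2_smul_mulVec_ne_zero
    (h : (col2 ((b • A) *ᵥ v₁) ((b • A) *ᵥ v₂)).det ≠ 0) : b ≠ 0 := by
  rintro rfl
  rw [det_col2_smul_mulVec] at h
  simp at h

lemma inv_mulVec_smul_mulVec (hA : IsUnit A.det) (v : Fin 2 → ℝ) :
    A⁻¹ *ᵥ ((b • A) *ᵥ v) = b • v := by
  rw [smul_mulVec, mulVec_smul, mulVec_mulVec, nonsing_inv_mul _ hA, one_mulVec]

theorem inv_smul_eq_neg_J2_mul_inv_transpose_col2 (hA : A.IsSymm) (g : Fin 2 → ℝ)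
    (hdet : (col2 ((b • A) *ᵥ v₁) ((b • A) *ᵥ v₂)).det ≠ 0) :
    b⁻¹ • g = (-(J2 * A * ((col2 ((b • A) *ᵥ v₁) ((b • A) *ᵥ v₂))ᵀ)⁻¹)) *ᵥ
      ![v₁ ⬝ᵥ (J2 *ᵥ g), v₂ ⬝ᵥ (J2 *ᵥ g)] := by
  have hb := ne_zero_of_det_col2_smul_mulVec_ne_zero hdet
  rw [det_col2_smul_mulVec] at hdet
  set V := col2 v₁ v₂
  have hbA : IsUnit (b • A).det := by
    rw [det_smul]
    exact (mul_ne_zero (pow_ne_zero _ hb) (right_ne_zero_of_mul (left_ne_zero_of_mul hdet))).isUnit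
  have hV : IsUnit Vᵀ.det := by
    rw [det_transpose]
    exact (right_ne_zero_of_mul hdet).isUnit
  have hHt : (col2 ((b • A) *ᵥ v₁) ((b • A) *ᵥ v₂))ᵀ = Vᵀ * (b • A) := by
    rw [col2_mulVec_mulVec, transpose_mul, transpose_smul, hA.eq]
  have hAB : A * (b • A)⁻¹ = b⁻¹ • 1 := by
    rw [← mul_nonsing_inv _ hbA, smul_mul, smul_smul, inv_mul_cancel₀ hb, one_smul]
  have hassoc : -(J2 * A * ((b • A)⁻¹ * Vᵀ⁻¹)) * Vᵀ * J2
      = -(J2 * (A * (b • A)⁻¹) * (Vᵀ⁻¹ * Vᵀ) * J2) := by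
    simp only [Matrix.mul_assoc, neg_mul]
  rw [← col2_transpose_mulVec, hHt, Matrix.mul_inv_rev, mulVec_mulVec, mulVec_mulVec, hassoc,
    hAB, nonsing_inv_mul _ hV, Matrix.mul_one, Matrix.mul_smul, Matrix.mul_one, smul_mul,
    J2_mul_J2, smul_neg, neg_neg, smul_mulVec, one_mulVec]

end LinearAlgebra

section Calculus

variable {β u : (Fin 2 → ℝ) → ℝ} {x : Fin 2 → ℝ}

lemma grad_log (hβ : DifferentiableAt ℝ β x) (hx : β x ≠ 0) :
    grad (fun y => Real.log (β y)) x = (β x)⁻¹ • grad β x := by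
  ext i
  simp [grad, (hβ.hasFDerivAt.log hx).fderiv]

lemma curl2_congr {F G : (Fin 2 → ℝ) → Fin 2 → ℝ} (h : F =ᶠ[𝓝 x] G) :
    curl2 F x = curl2 G x := by
  have hF (i : Fin 2) : (fun y => F y i) =ᶠ[𝓝 x] fun y => G y i :=
    h.mono fun y hy => congrFun hy i
  rw [curl2, curl2, (hF 0).fderiv_eq, (hF 1).fderiv_eq]

lemma hasFDerivAt_grad_apply (hu : DifferentiableAt ℝ (fderiv ℝ u) x) (j : Fin 2) :
    HasFDerivAt (fun y => grad u y j)
      ((ContinuousLinearMap.apply ℝ ℝ (Pi.single j 1)).comp (fderiv ℝ (fderiv ℝ u) x)) x :=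
  (ContinuousLinearMap.apply ℝ ℝ (Pi.single j 1 : Fin 2 → ℝ)).hasFDerivAt.comp x hu.hasFDerivAt

lemma curl2_smul_grad (hβ : DifferentiableAt ℝ β x) (hu : ContDiffAt ℝ 2 u x) :
    curl2 (fun y => β y • grad u y) x = grad u x ⬝ᵥ (J2 *ᵥ grad β x) := by
  have hDu : DifferentiableAt ℝ (fderiv ℝ u) x :=
    (hu.fderiv_right (m := 1) le_rfl).differentiableAt one_ne_zero
  have hprod (j : Fin 2) := hβ.hasFDerivAt.fun_mul (hasFDerivAt_grad_apply hDu j)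
  have hsym := hu.isSymmSndFDerivAt (by simp) (Pi.single 0 1) (Pi.single 1 1)
  simp only [curl2, Pi.smul_apply, smul_eq_mul, (hprod 0).fderiv, (hprod 1).fderiv]
  simp only [grad, _root_.add_apply, _root_.smul_apply,
    ContinuousLinearMap.comp_apply, ContinuousLinearMap.apply_apply, hsym, smul_eq_mul, dotProduct,
    mulVec, J2, of_apply, cons_val', cons_val_fin_one, Fin.sum_univ_two, cons_val_zero,
    cons_val_one]
  ring

end Calculus

theorem stmt2 (U : Set (Fin 2 → ℝ)) (hU : IsOpen U)
    (β : (Fin 2 → ℝ) → ℝ) (hβC : ContDiffOn ℝ 1 β U)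
    (γt : (Fin 2 → ℝ) → Matrix (Fin 2) (Fin 2) ℝ)
    (hγtsymm : ∀ x ∈ U, (γt x).IsSymm) (hγtinv : ∀ x ∈ U, IsUnit (γt x).det)
    (u₁ u₂ : (Fin 2 → ℝ) → ℝ)
    (hu₁ : ContDiffOn ℝ 2 u₁ U) (hu₂ : ContDiffOn ℝ 2 u₂ U)
    (H₁ H₂ : (Fin 2 → ℝ) → Fin 2 → ℝ)
    (hH₁ : ∀ x ∈ U, H₁ x = (β x • γt x).mulVec (grad u₁ x))
    (hH₂ : ∀ x ∈ U, H₂ x = (β x • γt x).mulVec (grad u₂ x)) :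
    ∀ x ∈ U, (col2 (H₁ x) (H₂ x)).det ≠ 0 →
      grad (fun y => Real.log (β y)) x =
        (-(J2 * γt x * ((col2 (H₁ x) (H₂ x))ᵀ)⁻¹)).mulVec
          ![curl2 (fun y => (γt y)⁻¹.mulVec (H₁ y)) x,
            curl2 (fun y => (γt y)⁻¹.mulVec (H₂ y)) x] := by
  intro x hx hdet
  have hxU : U ∈ 𝓝 x := hU.mem_nhds hx
  have hβ : DifferentiableAt ℝ β x := (hβC.contDiffAt hxU).differentiableAt one_ne_zero
  have hcurl (u : (Fin 2 → ℝ) → ℝ) (H : (Fin 2 → ℝ) → Fin 2 → ℝ) (hu : ContDiffOn ℝ 2 u U)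
      (hH : ∀ y ∈ U, H y = (β y • γt y) *ᵥ grad u y) :
      curl2 (fun y => (γt y)⁻¹ *ᵥ H y) x = grad u x ⬝ᵥ (J2 *ᵥ grad β x) := by
    have hγH : (fun y => (γt y)⁻¹ *ᵥ H y) =ᶠ[𝓝 x] fun y => β y • grad u y := by
      filter_upwards [hxU] with y hy
      rw [hH y hy, inv_mulVec_smul_mulVec (hγtinv y hy)]
    rw [curl2_congr hγH, curl2_smul_grad hβ (hu.contDiffAt hxU)]
  rw [hcurl u₁ H₁ hu₁ hH₁, hcurl u₂ H₂ hu₂ hH₂]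
  rw [hH₁ x hx, hH₂ x hx] at hdet ⊢
  rw [grad_log hβ (ne_zero_of_det_col2_smul_mulVec_ne_zero hdet)]
  exact inv_smul_eq_neg_J2_mul_inv_transpose_col2 (hγtsymm x hx) (grad β x) hdet
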